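/- For real λ and l > 0, the equality s_1(iλl) = 0 together with s_2(iλl) = 0 implies λ = 0. -/

import Mathlib

/-!
Fourier inversion over the cube roots of unity gives `e^{zζ} = s₀(z) + ζ s₁(z) + ζ² s₂(z)`, so at a
common zero `z` of `s₁` and `s₂` we get `e^{zζ₂} = e^{zζ₃}`. For `z = iλl` the quotient
`e^{z(ζ₂ - ζ₃)} = e^{-λl√3}` is a real exponential, which equals `1` only when `λl = 0`.
-/

open Complex

noncomputable def ζ2 : ℂ := (-1 + Complex.I * Real.sqrt 3) / 2
noncomputable def ζ3 : ℂ := (-1 - Complex.I * Real.sqrt 3) / 2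

/-- `s p z = (1/3) ∑_{k=1}^{3} ζ_k^{-p} e^{z ζ_k}` with `ζ_1 = 1`. -/
noncomputable def s (p : ℕ) (z : ℂ) : ℂ :=
  (Complex.exp z + Complex.exp (z * ζ2) / ζ2 ^ p + Complex.exp (z * ζ3) / ζ3 ^ p) / 3

lemma I_mul_sqrt_three_sq : (I * Real.sqrt 3) ^ 2 = -3 := by
  rw [mul_pow, I_sq, ← ofReal_pow, Real.sq_sqrt (by norm_num)]; push_cast; ring

lemma ζ2_mul_ζ3 : ζ2 * ζ3 = 1 := by
  unfold ζ2 ζ3; linear_combination (-1/4 : ℂ) * I_mul_sqrt_three_sq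

lemma ζ2_sq : ζ2 ^ 2 = ζ3 := by
  unfold ζ2 ζ3; linear_combination (1/4 : ℂ) * I_mul_sqrt_three_sq

lemma ζ3_sq : ζ3 ^ 2 = ζ2 := by
  unfold ζ2 ζ3; linear_combination (1/4 : ℂ) * I_mul_sqrt_three_sq

lemma ζ2_sq_add_ζ2_add_one : ζ2 ^ 2 + ζ2 + 1 = 0 := by
  unfold ζ2; linear_combination (1/4 : ℂ) * I_mul_sqrt_three_sq

lemma ζ3_sq_add_ζ3_add_one : ζ3 ^ 2 + ζ3 + 1 = 0 := by
  unfold ζ3; linear_combination (1/4 : ℂ) * I_mul_sqrt_three_sq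

lemma ζ2_sub_ζ3 : ζ2 - ζ3 = I * Real.sqrt 3 := by
  unfold ζ2 ζ3; ring

lemma s_one (z : ℂ) : s 1 z = (exp z + exp (z * ζ2) * ζ3 + exp (z * ζ3) * ζ2) / 3 := by
  simp only [s, pow_one, div_eq_mul_inv (exp _), inv_eq_of_mul_eq_one_right ζ2_mul_ζ3,
    inv_eq_of_mul_eq_one_left ζ2_mul_ζ3]

lemma s_two (z : ℂ) : s 2 z = (exp z + exp (z * ζ2) * ζ2 + exp (z * ζ3) * ζ3) / 3 := by
  simp only [s, ζ2_sq, ζ3_sq, div_eq_mul_inv (exp _), inv_eq_of_mul_eq_one_right ζ2_mul_ζ3,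
    inv_eq_of_mul_eq_one_left ζ2_mul_ζ3]

lemma exp_mul_ζ2_eq_sum (z : ℂ) : exp (z * ζ2) = s 0 z + ζ2 * s 1 z + ζ2 ^ 2 * s 2 z := by
  rw [s_one, s_two, s, pow_zero, pow_zero, div_one, div_one]
  linear_combination (-1/3 : ℂ) * ((exp z + (ζ2 - 1) * exp (z * ζ2) + exp (z * ζ3)) *
    ζ2_sq_add_ζ2_add_one + (exp (z * ζ2) + ζ2 * exp (z * ζ3)) * ζ2_mul_ζ3)

lemma exp_mul_ζ3_eq_sum (z : ℂ) : exp (z * ζ3) = s 0 z + ζ3 * s 1 z + ζ3 ^ 2 * s 2 z := by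
  rw [s_one, s_two, s, pow_zero, pow_zero, div_one, div_one]
  linear_combination (-1/3 : ℂ) * ((exp z + exp (z * ζ2) + (ζ3 - 1) * exp (z * ζ3)) *
    ζ3_sq_add_ζ3_add_one + (exp (z * ζ3) + ζ3 * exp (z * ζ2)) * ζ2_mul_ζ3)

lemma exp_mul_ζ2_eq_exp_mul_ζ3_of_s_eq_zero {z : ℂ} (h1 : s 1 z = 0) (h2 : s 2 z = 0) :
    exp (z * ζ2) = exp (z * ζ3) := by
  rw [exp_mul_ζ2_eq_sum, exp_mul_ζ3_eq_sum, h1, h2]; ring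

lemma eq_zero_of_exp_I_mul_ζ2_eq_exp_I_mul_ζ3 {t : ℝ} (h : exp (I * t * ζ2) = exp (I * t * ζ3)) :
    t = 0 := by
  have hdiff : I * t * ζ2 - I * t * ζ3 = ((-(t * Real.sqrt 3) : ℝ) : ℂ) := by
    rw [← mul_sub, ζ2_sub_ζ3]; push_cast; linear_combination (t * Real.sqrt 3 : ℂ) * I_sq
  have hexp : Real.exp (-(t * Real.sqrt 3)) = 1 := by
    rw [← ofReal_inj, ofReal_exp, ← hdiff, exp_sub, h, div_self (exp_ne_zero _), ofReal_one]
  have ht : t * Real.sqrt 3 = 0 := neg_eq_zero.mp (Real.exp_eq_one_iff _ |>.mp hexp)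
  exact (mul_eq_zero.mp ht).resolve_right (by positivity)

theorem s1_s2_common_zero (lam l : ℝ) (hl : 0 < l)
    (h1 : s 1 (Complex.I * lam * l) = 0) (h2 : s 2 (Complex.I * lam * l) = 0) :
    lam = 0 := by
  have hz : Complex.I * lam * l = I * ((lam * l : ℝ) : ℂ) := by push_cast; ring
  rw [hz] at h1 h2
  have hlam_l :=
    eq_zero_of_exp_I_mul_ζ2_eq_exp_I_mul_ζ3 (exp_mul_ζ2_eq_exp_mul_ζ3_of_s_eq_zero h1 h2)
  exact (mul_eq_zero.mp hlam_l).resolve_right hl.ne'
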